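/- If T and S are Schwartz operators on L²(ℝ^N) and A is a bounded operator on L²(ℝ^N), then the product TAS is again a Schwartz operator, and for all multi-indices α, α', β, β' ∈ ℕ^N one has ‖TAS‖_{α,α',β,β'} ≤ ‖A‖ · ‖T‖_{α,0,β,0} · ‖S‖_{0,α',0,β'}, where ‖A‖ is the operator norm. -/

import Mathlib

open MeasureTheory SchwartzMap Complex

noncomputable section

/-- Configuration space ℝ^N. -/
abbrev Cfg (N : ℕ) := EuclideanSpace ℝ (Fin N)

/-- The Hilbert space L²(ℝ^N). -/
abbrev L2 (N : ℕ) := MeasureTheory.Lp ℂ 2 (volume : Measure (Cfg N))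

theorem schwartz_memL2 {N : ℕ} (f : 𝓢(Cfg N, ℂ)) :
    MeasureTheory.MemLp (⇑f) 2 (volume : Measure (Cfg N)) := by
  rw [MeasureTheory.memLp_two_iff_integrable_sq_norm f.continuous.aestronglyMeasurable]
  have h1 : MeasureTheory.Integrable (fun x => (SchwartzMap.seminorm ℝ 0 0 f) * ‖f x‖) volume :=
    f.integrable.norm.const_mul _
  refine h1.mono ((f.continuous.norm.pow 2).aestronglyMeasurable) ?_
  refine Filter.Eventually.of_forall fun x => ?_
  have h2 := SchwartzMap.norm_le_seminorm ℝ f x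
  have h3 : ‖f x‖ ^ 2 ≤ (SchwartzMap.seminorm ℝ 0 0 f) * ‖f x‖ := by
    rw [sq]; exact mul_le_mul_of_nonneg_right h2 (norm_nonneg _)
  calc ‖‖f x‖ ^ 2‖ = ‖f x‖ ^ 2 := by rw [Real.norm_of_nonneg (by positivity)]
    _ ≤ (SchwartzMap.seminorm ℝ 0 0 f) * ‖f x‖ := h3
    _ ≤ ‖(SchwartzMap.seminorm ℝ 0 0 f) * ‖f x‖‖ := le_abs_self _

/-- Embedding of Schwartz functions into L². -/
def toL2 {N : ℕ} (f : 𝓢(Cfg N, ℂ)) : L2 N := (schwartz_memL2 f).toLp ⇑f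

/-- The position operator Q_i (multiplication by the i-th coordinate). -/
def Qop {N : ℕ} (i : Fin N) (f : 𝓢(Cfg N, ℂ)) : 𝓢(Cfg N, ℂ) :=
  SchwartzMap.bilinLeftCLM ((ContinuousLinearMap.lsmul ℝ ℝ : ℝ →L[ℝ] ℂ →L[ℝ] ℂ).flip)
    ((EuclideanSpace.proj i : Cfg N →L[ℝ] ℝ).hasTemperateGrowth) f

/-- The momentum operator P_i = -i ∂/∂q_i. -/
def Pop {N : ℕ} (i : Fin N) (f : 𝓢(Cfg N, ℂ)) : 𝓢(Cfg N, ℂ) :=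
  (-Complex.I) • (LineDeriv.lineDerivOpCLM ℝ 𝓢(Cfg N, ℂ) (EuclideanSpace.single i (1:ℝ)) f)

/-- `opPow A α` is the operator `A₁^{α₁} ∘ ⋯ ∘ A_N^{α_N}`. -/
def opPow {σ : Type*} {N : ℕ} (A : Fin N → σ → σ) (α : Fin N → ℕ) : σ → σ :=
  (List.ofFn fun i => (A i)^[α i]).foldr (· ∘ ·) id

/-- `Q^α P^β` acting on Schwartz functions. -/
def QP {N : ℕ} (α β : Fin N → ℕ) (f : 𝓢(Cfg N, ℂ)) : 𝓢(Cfg N, ℂ) :=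
  opPow Qop α (opPow Pop β f)

/-- `P^β Q^α` acting on Schwartz functions. -/
def PQ {N : ℕ} (β α : Fin N → ℕ) (f : 𝓢(Cfg N, ℂ)) : 𝓢(Cfg N, ℂ) :=
  opPow Pop β (opPow Qop α f)

/-- The set of values `|⟨P^β Q^α ψ, T P^{β'} Q^{α'} φ⟩|` over normalized Schwartz `ψ, φ`. -/
def schwartzOpSet {N : ℕ} (T : L2 N →L[ℂ] L2 N) (α α' β β' : Fin N → ℕ) : Set ℝ :=
  { r | ∃ ψ φ : 𝓢(Cfg N, ℂ), ‖toL2 ψ‖ ≤ 1 ∧ ‖toL2 φ‖ ≤ 1 ∧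
      r = ‖(inner ℂ (toL2 (PQ β α ψ)) (T (toL2 (PQ β' α' φ))) : ℂ)‖ }

/-- The seminorm `‖T‖_{α,α',β,β'}` (as a supremum). -/
def opSeminorm {N : ℕ} (T : L2 N →L[ℂ] L2 N) (α α' β β' : Fin N → ℕ) : ℝ :=
  sSup (schwartzOpSet T α α' β β')

/-- A bounded operator on L²(ℝ^N) is a Schwartz operator if all the quantities
`‖T‖_{α,α',β,β'}` are finite. -/
def IsSchwartzOp {N : ℕ} (T : L2 N →L[ℂ] L2 N) : Prop :=
  ∀ α α' β β' : Fin N → ℕ, BddAbove (schwartzOpSet T α α' β β')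

/-!
Write `x = P^β Q^α ψ` and `y = P^{β'} Q^{α'} φ`. Then `⟨x, TAS y⟩ = ⟨T† x, A (S y)⟩`, which
Cauchy–Schwarz bounds by `‖T† x‖ ‖A‖ ‖S y‖`. Since Schwartz functions are dense in L², the norm of a
vector is the supremum of its pairings with normalized Schwartz functions, and these pairings with
`T† x` and `S y` are exactly the quantities bounded by `‖T‖_{α,0,β,0}` and `‖S‖_{0,α',0,β'}`.
-/

open scoped InnerProductSpace

section InnerProductSpace

variable {𝕜 E V : Type*} [RCLike 𝕜] [NormedAddCommGroup E] [InnerProductSpace 𝕜 E]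
  [AddCommGroup V] [Module 𝕜 V]

theorem norm_inner_le_of_forall_norm_le_one {L : V →ₗ[𝕜] E} {w : E} {C : ℝ}
    (h : ∀ v, ‖L v‖ ≤ 1 → ‖⟪L v, w⟫_𝕜‖ ≤ C) (v : V) : ‖⟪L v, w⟫_𝕜‖ ≤ C * ‖L v‖ := by
  rcases eq_or_ne (L v) 0 with hv | hv
  · simp only [hv, inner_zero_left, norm_zero, mul_zero, le_refl]
  have hpos : 0 < ‖L v‖ := norm_pos_iff.2 hv
  have hunit : ‖L ((‖L v‖⁻¹ : 𝕜) • v)‖ ≤ 1 := by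
    rw [map_smul, norm_smul, norm_inv, RCLike.norm_ofReal, abs_norm, inv_mul_cancel₀ hpos.ne']
  have := h _ hunit
  rwa [map_smul, inner_smul_left, norm_mul, RCLike.norm_conj, norm_inv, RCLike.norm_ofReal,
    abs_norm, inv_mul_le_iff₀ hpos, mul_comm] at this

theorem norm_le_of_denseRange_of_forall_inner_le {L : V →ₗ[𝕜] E} (hL : DenseRange L) {w : E}
    {C : ℝ} (h : ∀ v, ‖L v‖ ≤ 1 → ‖⟪L v, w⟫_𝕜‖ ≤ C) : ‖w‖ ≤ C := by
  have hbound (u : E) : ‖⟪u, w⟫_𝕜‖ ≤ C * ‖u‖ :=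
    hL.induction_on (p := fun u => ‖⟪u, w⟫_𝕜‖ ≤ C * ‖u‖) u
      (isClosed_le (by fun_prop) (by fun_prop)) (norm_inner_le_of_forall_norm_le_one h)
  have hC : 0 ≤ C := by simpa using h 0 (by simp)
  rcases eq_or_ne w 0 with rfl | hw
  · simpa using hC
  have hself := hbound w
  rw [inner_self_eq_norm_sq_to_K, norm_pow, RCLike.norm_ofReal, abs_norm, sq] at hself
  exact le_of_mul_le_mul_right hself (norm_pos_iff.2 hw)

theorem norm_inner_comp_comp_le [CompleteSpace E] (T A S : E →L[𝕜] E) (x y : E) :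
    ‖⟪x, (T ∘L A ∘L S) y⟫_𝕜‖ ≤ ‖T.adjoint x‖ * ‖A‖ * ‖S y‖ := calc
  ‖⟪x, (T ∘L A ∘L S) y⟫_𝕜‖ = ‖⟪T.adjoint x, A (S y)⟫_𝕜‖ := by
    rw [ContinuousLinearMap.adjoint_inner_left]; rfl
  _ ≤ ‖T.adjoint x‖ * ‖A (S y)‖ := norm_inner_le_norm _ _
  _ ≤ ‖T.adjoint x‖ * (‖A‖ * ‖S y‖) := by gcongr; exact A.le_opNorm _
  _ = ‖T.adjoint x‖ * ‖A‖ * ‖S y‖ := (mul_assoc _ _ _).symm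

end InnerProductSpace

section SchwartzOp

variable {N : ℕ}

theorem toL2_zero : toL2 (0 : 𝓢(Cfg N, ℂ)) = 0 :=
  MemLp.toLp_zero _

theorem norm_le_of_forall_inner_toL2_le {w : L2 N} {C : ℝ}
    (h : ∀ f : 𝓢(Cfg N, ℂ), ‖toL2 f‖ ≤ 1 → ‖⟪toL2 f, w⟫_ℂ‖ ≤ C) : ‖w‖ ≤ C :=
  norm_le_of_denseRange_of_forall_inner_le
    (L := (SchwartzMap.toLpCLM ℂ ℂ 2 (volume : Measure (Cfg N))).toLinearMap)
    (SchwartzMap.denseRange_toLpCLM (by norm_num)) h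

theorem opPow_zero {σ : Type*} (A : Fin N → σ → σ) : opPow A 0 = id := by
  simp only [opPow, Pi.zero_apply, Function.iterate_zero, List.ofFn_const]
  clear A
  induction N with
  | zero => rfl
  | succ n ih => rw [List.replicate_succ, List.foldr_cons, ih]; rfl

theorem PQ_zero_zero (f : 𝓢(Cfg N, ℂ)) : PQ 0 0 f = f := by
  simp only [PQ, opPow_zero, id]

theorem schwartzOpSet_nonempty (T : L2 N →L[ℂ] L2 N) (α α' β β' : Fin N → ℕ) :
    (schwartzOpSet T α α' β β').Nonempty :=
  ⟨_, 0, 0, by simp [toL2_zero], by simp [toL2_zero], rfl⟩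

variable {T : L2 N →L[ℂ] L2 N} {α α' β β' : Fin N → ℕ}

theorem norm_adjoint_toL2_PQ_le (hT : BddAbove (schwartzOpSet T α 0 β 0))
    {ψ : 𝓢(Cfg N, ℂ)} (hψ : ‖toL2 ψ‖ ≤ 1) :
    ‖T.adjoint (toL2 (PQ β α ψ))‖ ≤ opSeminorm T α 0 β 0 := by
  refine norm_le_of_forall_inner_toL2_le fun f hf => le_csSup hT ⟨ψ, f, hψ, hf, ?_⟩
  rw [PQ_zero_zero, norm_inner_symm, ContinuousLinearMap.adjoint_inner_left]

theorem norm_apply_toL2_PQ_le (hT : BddAbove (schwartzOpSet T 0 α' 0 β'))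
    {φ : 𝓢(Cfg N, ℂ)} (hφ : ‖toL2 φ‖ ≤ 1) :
    ‖T (toL2 (PQ β' α' φ))‖ ≤ opSeminorm T 0 α' 0 β' :=
  norm_le_of_forall_inner_toL2_le fun f hf => le_csSup hT ⟨f, φ, hf, hφ, by rw [PQ_zero_zero]⟩

end SchwartzOp

/-- If `T, S` are Schwartz operators and `A` is bounded, then `TAS` is a Schwartz operator and
`‖TAS‖_{α,α',β,β'} ≤ ‖A‖·‖T‖_{α,0,β,0}·‖S‖_{0,α',0,β'}`. -/
theorem schwartzOp_sandwich {N : ℕ} (T S A : L2 N →L[ℂ] L2 N)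
    (hT : IsSchwartzOp T) (hS : IsSchwartzOp S) :
    IsSchwartzOp (T ∘L A ∘L S) ∧
      ∀ α α' β β' : Fin N → ℕ,
        opSeminorm (T ∘L A ∘L S) α α' β β' ≤
          ‖A‖ * opSeminorm T α 0 β 0 * opSeminorm S 0 α' 0 β' := by
  have bound : ∀ α α' β β' : Fin N → ℕ, ∀ r ∈ schwartzOpSet (T ∘L A ∘L S) α α' β β',
      r ≤ ‖A‖ * opSeminorm T α 0 β 0 * opSeminorm S 0 α' 0 β' := by
    rintro α α' β β' _ ⟨ψ, φ, hψ, hφ, rfl⟩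
    have hTψ := norm_adjoint_toL2_PQ_le (hT α 0 β 0) hψ
    have hSφ := norm_apply_toL2_PQ_le (hS 0 α' 0 β') hφ
    calc _ ≤ ‖T.adjoint (toL2 (PQ β α ψ))‖ * ‖A‖ * ‖S (toL2 (PQ β' α' φ))‖ :=
          norm_inner_comp_comp_le T A S _ _
      _ ≤ opSeminorm T α 0 β 0 * ‖A‖ * opSeminorm S 0 α' 0 β' := by
          gcongr
          exact mul_nonneg ((norm_nonneg _).trans hTψ) (norm_nonneg A)
      _ = _ := by ring
  exact ⟨fun α α' β β' => ⟨_, bound α α' β β'⟩,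
    fun α α' β β' => csSup_le (schwartzOpSet_nonempty _ _ _ _ _) (bound α α' β β')⟩

end
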